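/- Let d be a positive integer, let r be a positive integer with r ≤ d, set δ = 2^{−r}, and let ε ∈ (0,1). Suppose 𝓕 is a collection of subsets of 𝔽₂^d, each of size at least ε·2^d, such that for every subset A ⊆ 𝔽₂^d with |A| ≥ δ·2^d the sumset A + A contains some member of 𝓕 as a subset. Then |𝓕| ≥ 2^{d·r − r·log₂(1/ε) − r²}. -/

import Mathlib

open scoped Pointwise
open Finset

namespace Stmt16Aux

variable {n r d : ℕ}

/-- lower-coordinate projection -/
def pa (h : n + r = d) (x : Fin d → ZMod 2) : Fin n → ZMod 2 :=
  fun i => x (finCongr h (Fin.castAdd r i))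

/-- upper-coordinate projection -/
def pb (h : n + r = d) (x : Fin d → ZMod 2) : Fin r → ZMod 2 :=
  fun j => x (finCongr h (Fin.natAdd n j))

/-- glue -/
def qg (h : n + r = d) (u : Fin n → ZMod 2) (v : Fin r → ZMod 2) : Fin d → ZMod 2 :=
  fun k => Fin.addCases u v (finCongr h.symm k)

lemma pa_qg (h : n + r = d) (u : Fin n → ZMod 2) (v : Fin r → ZMod 2) :
    pa h (qg h u v) = u := by
  funext i
  simp [pa, qg]

lemma pb_qg (h : n + r = d) (u : Fin n → ZMod 2) (v : Fin r → ZMod 2) :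
    pb h (qg h u v) = v := by
  funext j
  simp [pb, qg]

lemma qg_pa_pb (h : n + r = d) (x : Fin d → ZMod 2) :
    qg h (pa h x) (pb h x) = x := by
  funext k
  have hk : k = finCongr h (finCongr h.symm k) := by simp
  rw [hk]
  generalize (finCongr h.symm k) = k'
  show Fin.addCases (pa h x) (pb h x) (finCongr h.symm (finCongr h k')) = x (finCongr h k')
  rw [show finCongr h.symm (finCongr h k') = k' by simp]
  induction k' using Fin.addCases with
  | left i => simp [pa]
  | right j => simp [pb]

lemma pa_add (h : n + r = d) (x y : Fin d → ZMod 2) :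
    pa h (x + y) = pa h x + pa h y := rfl

lemma pb_add (h : n + r = d) (x y : Fin d → ZMod 2) :
    pb h (x + y) = pb h x + pb h y := rfl

end Stmt16Aux

namespace Stmt16Aux

/-- the graph subspace of a matrix, as a Finset -/
def VM (h : n + r = d) (M : Matrix (Fin r) (Fin n) (ZMod 2)) : Finset (Fin d → ZMod 2) :=
  Finset.univ.filter (fun x => pb h x = M.mulVec (pa h x))

lemma mem_VM (h : n + r = d) (M : Matrix (Fin r) (Fin n) (ZMod 2)) (x : Fin d → ZMod 2) :
    x ∈ VM h M ↔ pb h x = M.mulVec (pa h x) := by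
  simp [VM]

lemma card_VM (h : n + r = d) (M : Matrix (Fin r) (Fin n) (ZMod 2)) :
    (VM h M).card = 2 ^ n := by
  rw [show (2:ℕ)^n = (Finset.univ : Finset (Fin n → ZMod 2)).card by
    simp]
  apply Finset.card_bij' (fun x _ => pa h x) (fun u _ => qg h u (M.mulVec u))
  · intros; exact Finset.mem_univ _
  · intro u _
    rw [mem_VM, pa_qg, pb_qg]
  · intro x hx
    rw [mem_VM] at hx
    rw [← hx, qg_pa_pb]
  · intro u _
    rw [pa_qg]

lemma add_VM (h : n + r = d) (M : Matrix (Fin r) (Fin n) (ZMod 2)) :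
    VM h M + VM h M ⊆ VM h M := by
  intro z hz
  rw [Finset.mem_add] at hz
  obtain ⟨x, hx, y, hy, rfl⟩ := hz
  rw [mem_VM] at hx hy ⊢
  rw [pa_add, pb_add, hx, hy, Matrix.mulVec_add]

end Stmt16Aux

namespace Stmt16Aux

lemma natcard_pow (V : Type*) [AddCommGroup V] [Module (ZMod 2) V] [Finite V] :
    Nat.card V = 2 ^ Module.finrank (ZMod 2) V := by
  cases nonempty_fintype V
  rw [Nat.card_eq_fintype_card, Module.card_eq_pow_finrank (K := ZMod 2), ZMod.card]

end Stmt16Aux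

namespace Stmt16Aux

lemma fiber_bound (h : n + r = d) (F : Finset (Fin d → ZMod 2))
    (S : Finset (Matrix (Fin r) (Fin n) (ZMod 2)))
    (hS : ∀ M ∈ S, F ⊆ VM h M) (hne : S.Nonempty) :
    S.card * F.card ^ r ≤ 2 ^ (n * r) := by
  classical
  obtain ⟨M₀, hM₀⟩ := hne
  -- pa is injective on F
  have hinj : Set.InjOn (pa h) ↑F := by
    intro x hx y hy hxy
    have hx' := (mem_VM h M₀ x).1 (hS M₀ hM₀ hx)
    have hy' := (mem_VM h M₀ y).1 (hS M₀ hM₀ hy)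
    calc x = qg h (pa h x) (pb h x) := (qg_pa_pb h x).symm
      _ = qg h (pa h y) (pb h y) := by rw [hx', hy', hxy]
      _ = y := qg_pa_pb h y
  set T : Finset (Fin n → ZMod 2) := F.image (pa h) with hTdef
  have hT : T.card = F.card := Finset.card_image_of_injOn hinj
  set W : Submodule (ZMod 2) (Fin n → ZMod 2) := Submodule.span (ZMod 2) ↑T with hWdef
  have hFW : F.card ≤ Nat.card W := by
    rw [← hT, ← Nat.card_eq_finsetCard]
    exact Nat.card_le_card_of_injective
      (fun t : {x // x ∈ T} => (⟨t.1, Submodule.subset_span t.2⟩ : W))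
      (fun a b hab => Subtype.ext (by simpa using hab))
  let ρ : Matrix (Fin r) (Fin n) (ZMod 2) →ₗ[ZMod 2] (W →ₗ[ZMod 2] (Fin r → ZMod 2)) :=
    (LinearMap.domRestrict' W).comp Matrix.toLin'.toLinearMap
  have hsurj : Function.Surjective ρ := by
    intro φ
    obtain ⟨g, hg⟩ := LinearMap.exists_extend φ
    refine ⟨LinearMap.toMatrix' g, ?_⟩
    show LinearMap.domRestrict' W (Matrix.toLin' (LinearMap.toMatrix' g)) = φ
    rw [Matrix.toLin'_toMatrix']
    ext w
    rw [LinearMap.domRestrict'_apply, ← hg]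
    rfl
  have hSker : ∀ M ∈ S, M - M₀ ∈ LinearMap.ker ρ := by
    intro M hM
    have hW : W ≤ LinearMap.ker (Matrix.toLin' (M - M₀)) := by
      rw [hWdef, Submodule.span_le]
      intro u hu
      obtain ⟨x, hx, rfl⟩ := Finset.mem_image.1 (by exact_mod_cast hu)
      have hx1 := (mem_VM h M x).1 (hS M hM hx)
      have hx0 := (mem_VM h M₀ x).1 (hS M₀ hM₀ hx)
      simp only [SetLike.mem_coe, LinearMap.mem_ker, Matrix.toLin'_apply,
        Matrix.sub_mulVec, ← hx1, ← hx0, sub_self]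
    rw [LinearMap.mem_ker]
    ext w
    have : (Matrix.toLin' (M - M₀)) (w : Fin n → ZMod 2) = 0 := hW w.2
    simpa [ρ] using congrFun this _
  have hcard1 : S.card ≤ Nat.card (LinearMap.ker ρ) := by
    rw [← Nat.card_eq_finsetCard]
    exact Nat.card_le_card_of_injective
      (fun M : {M // M ∈ S} => (⟨M.1 - M₀, hSker M.1 M.2⟩ : LinearMap.ker ρ))
      (fun a b hab => by
        apply Subtype.ext
        have := congrArg Subtype.val hab
        simpa [sub_left_injective.eq_iff] using this)
  haveI : Finite (W →ₗ[ZMod 2] (Fin r → ZMod 2)) :=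
    Finite.of_injective _ DFunLike.coe_injective
  have e1 : Nat.card (LinearMap.ker ρ) = 2 ^ Module.finrank (ZMod 2) (LinearMap.ker ρ) :=
    natcard_pow _
  have e2 : Nat.card W = 2 ^ Module.finrank (ZMod 2) W := natcard_pow _
  have e3 : Module.finrank (ZMod 2) (W →ₗ[ZMod 2] (Fin r → ZMod 2))
      + Module.finrank (ZMod 2) (LinearMap.ker ρ) = n * r := by
    have := LinearMap.finrank_range_add_finrank_ker ρ
    rw [LinearMap.range_eq_top.mpr hsurj, finrank_top] at this
    rw [this, Module.finrank_matrix]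
    simp [mul_comm]
  have e4 : Module.finrank (ZMod 2) (W →ₗ[ZMod 2] (Fin r → ZMod 2))
      = Module.finrank (ZMod 2) W * r := by
    rw [Module.finrank_linearMap, Module.finrank_fintype_fun_eq_card, Fintype.card_fin]
  calc S.card * F.card ^ r
      ≤ Nat.card (LinearMap.ker ρ) * (Nat.card W) ^ r :=
        Nat.mul_le_mul hcard1 (Nat.pow_le_pow_left hFW r)
    _ = 2 ^ (n * r) := by
        rw [e1, e2, ← pow_mul, ← pow_add, ← e3, e4, Nat.add_comm]

end Stmt16Aux

/-- the lower bound for covering collections in `𝔽₂^d`. If every `A` of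
density at least `δ = 2^{-r}` has `A + A` containing a member of `𝓕`, and the members of
`𝓕` all have size at least `ε·2^d`, then `|𝓕| ≥ 2^{dr − r·log₂(1/ε) − r²}`. -/
theorem stmt16 (d r : ℕ) (hd : 0 < d) (hr : 0 < r) (hrd : r ≤ d)
    (δ : ℝ) (hδ : δ = (2 : ℝ) ^ (-(r : ℝ))) (ε : ℝ) (hε : ε ∈ Set.Ioo (0 : ℝ) 1)
    (𝓕 : Finset (Finset (Fin d → ZMod 2)))
    (hsize : ∀ F ∈ 𝓕, (F.card : ℝ) ≥ ε * 2 ^ d)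
    (hcover : ∀ A : Finset (Fin d → ZMod 2),
      δ * 2 ^ d ≤ (A.card : ℝ) → ∃ F ∈ 𝓕, F ⊆ A + A) :
    (𝓕.card : ℝ) ≥
      (2 : ℝ) ^ ((d : ℝ) * (r : ℝ) - (r : ℝ) * Real.logb 2 (1 / ε) - (r : ℝ) ^ 2) := by
  classical
  open Stmt16Aux in
  set n := d - r with hn
  have h : n + r = d := Nat.sub_add_cancel hrd
  have hε0 : (0:ℝ) < ε := hε.1
  -- every VM has the right size for hcover
  have hVMsize : ∀ M : Matrix (Fin r) (Fin n) (ZMod 2),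
      δ * 2 ^ d ≤ (((VM h M).card : ℕ) : ℝ) := by
    intro M
    rw [card_VM]
    have : δ * 2 ^ d = (2:ℝ) ^ (n:ℕ) := by
      rw [hδ, ← Real.rpow_natCast 2 d, ← Real.rpow_add two_pos, ← Real.rpow_natCast 2 n]
      congr 1
      have : ((n:ℝ)) = (d:ℝ) - (r:ℝ) := by
        rw [hn]
        push_cast [Nat.cast_sub hrd]
        ring
      rw [this]; ring
    rw [this]
    norm_cast
  -- the choice function
  let f : Matrix (Fin r) (Fin n) (ZMod 2) → Finset (Fin d → ZMod 2) :=
    fun M => (hcover (VM h M) (hVMsize M)).choose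
  have hf1 : ∀ M, f M ∈ 𝓕 := fun M => (hcover (VM h M) (hVMsize M)).choose_spec.1
  have hf2 : ∀ M, f M ⊆ VM h M := fun M =>
    Finset.Subset.trans (hcover (VM h M) (hVMsize M)).choose_spec.2 (add_VM h M)
  -- fiberwise count
  have hsum : (Fintype.card (Matrix (Fin r) (Fin n) (ZMod 2)))
      = ∑ F ∈ 𝓕, (Finset.univ.filter (fun M => f M = F)).card := by
    rw [← Finset.card_univ]
    exact Finset.card_eq_sum_card_fiberwise (fun M _ => hf1 M)
  have hcardM : Fintype.card (Matrix (Fin r) (Fin n) (ZMod 2)) = 2 ^ (n * r) := by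
    rw [Fintype.card_congr (Matrix.of (m := Fin r) (n := Fin n) (α := ZMod 2)).symm]
    simp [← pow_mul, mul_comm]
  -- the real bound per fiber
  set P : ℝ := (ε * 2 ^ d) ^ r with hPdef
  have hP : 0 < P := by positivity
  have hfib : ∀ F ∈ 𝓕,
      (((Finset.univ.filter (fun M => f M = F)).card : ℕ) : ℝ) ≤ 2 ^ (n * r) / P := by
    intro F hF
    rcases Finset.eq_empty_or_nonempty (Finset.univ.filter (fun M => f M = F)) with he | hne
    · rw [he]
      simp only [Finset.card_empty, Nat.cast_zero]
      positivity
    · have hS : ∀ M ∈ Finset.univ.filter (fun M => f M = F), F ⊆ VM h M := by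
        intro M hM
        have : f M = F := (Finset.mem_filter.1 hM).2
        rw [← this]
        exact hf2 M
      have hb := fiber_bound h F _ hS hne
      have hcast : (((Finset.univ.filter (fun M => f M = F)).card : ℕ) : ℝ) * (F.card : ℝ) ^ r
          ≤ (2:ℝ) ^ (n * r) := by
        exact_mod_cast hb
      have hFc : (ε * 2 ^ d) ^ r ≤ ((F.card : ℝ)) ^ r :=
        pow_le_pow_left₀ (by positivity) (hsize F hF) r
      have hFc0 : (0:ℝ) < ((F.card : ℝ)) ^ r := lt_of_lt_of_le hP hFc
      rw [le_div_iff₀ hP]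
      calc (((Finset.univ.filter (fun M => f M = F)).card : ℕ) : ℝ) * P
          ≤ (((Finset.univ.filter (fun M => f M = F)).card : ℕ) : ℝ) * (F.card:ℝ) ^ r :=
            mul_le_mul_of_nonneg_left hFc (by positivity)
        _ ≤ 2 ^ (n * r) := hcast
  -- combine
  have hmain : ((2:ℝ) ^ (n * r)) ≤ (𝓕.card : ℝ) * ((2:ℝ) ^ (n * r) / P) := by
    have := Finset.sum_le_card_nsmul 𝓕
      (fun F => (((Finset.univ.filter (fun M => f M = F)).card : ℕ) : ℝ))
      ((2:ℝ) ^ (n * r) / P) hfib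
    rw [nsmul_eq_mul] at this
    calc ((2:ℝ) ^ (n * r)) = ((Fintype.card (Matrix (Fin r) (Fin n) (ZMod 2)) : ℕ) : ℝ) := by
          rw [hcardM]; push_cast; ring
      _ = ∑ F ∈ 𝓕, (((Finset.univ.filter (fun M => f M = F)).card : ℕ) : ℝ) := by
          rw [hsum]; push_cast; ring
      _ ≤ (𝓕.card : ℝ) * ((2:ℝ) ^ (n * r) / P) := this
  have hPF : P ≤ (𝓕.card : ℝ) := by
    have h2 : (0:ℝ) < (2:ℝ) ^ (n * r) := by positivity
    rw [mul_div_assoc'] at hmain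
    rw [le_div_iff₀ hP] at hmain
    have h3 : P * (2:ℝ)^(n*r) ≤ (𝓕.card : ℝ) * 2^(n*r) := by
      calc P * (2:ℝ)^(n*r) = 2^(n*r) * P := by ring
        _ ≤ (𝓕.card : ℝ) * 2^(n*r) := hmain
    exact le_of_mul_le_mul_right h3 h2
  -- final numeric comparison
  refine le_trans ?_ hPF
  have hre : P = ε ^ r * (2:ℝ) ^ (d * r) := by
    rw [hPdef, mul_pow, ← pow_mul]
  have key1 : (2:ℝ) ^ (-((r:ℝ) * Real.logb 2 (1/ε))) = ε ^ r := by
    rw [show -((r:ℝ) * Real.logb 2 (1/ε)) = Real.logb 2 (1/ε) * (-(r:ℝ)) by ring,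
      Real.rpow_mul (by norm_num), Real.rpow_logb (by positivity) (by norm_num) (by positivity),
      one_div, Real.rpow_neg (inv_nonneg.mpr hε0.le), Real.inv_rpow hε0.le, inv_inv,
      Real.rpow_natCast]
  calc (2 : ℝ) ^ ((d : ℝ) * (r : ℝ) - (r : ℝ) * Real.logb 2 (1 / ε) - (r : ℝ) ^ 2)
      = (2:ℝ) ^ ((d:ℝ) * (r:ℝ)) * (2:ℝ) ^ (-((r:ℝ) * Real.logb 2 (1/ε)))
        * (2:ℝ) ^ (-((r:ℝ)^2)) := by
        rw [← Real.rpow_add two_pos, ← Real.rpow_add two_pos]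
        ring_nf
    _ ≤ (2:ℝ) ^ ((d:ℝ) * (r:ℝ)) * (2:ℝ) ^ (-((r:ℝ) * Real.logb 2 (1/ε))) * 1 := by
        apply mul_le_mul_of_nonneg_left _ (by positivity)
        exact Real.rpow_le_one_of_one_le_of_nonpos (by norm_num)
          (neg_nonpos.mpr (by positivity))
    _ = P := by
        rw [mul_one, key1, hre,
          show ((d:ℝ) * (r:ℝ)) = ((d*r : ℕ) : ℝ) by push_cast; ring, Real.rpow_natCast]
        ring
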